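/- Shapley values for the area of the anchored bounding box: let P be a finite set of n points in the open positive quadrant of ℝ², with all x-coordinates pairwise distinct and all y-coordinates pairwise distinct, and let X = max_{q∈P} x(q), Y = max_{q∈P} y(q). Let v_abb be the coalitional game on P with v_abb(Q) = (max_{q∈Q} x(q)) · (max_{q∈Q} y(q)) for nonempty Q (the area of the bounding box of Q ∪ {origin}), and v_abb(∅)=0. For z in the open positive quadrant define ne(z) = |{q ∈ P : x(q) ≥ x(z), y(q) ≥ y(z)}|, nw(z) = |{q ∈ P : x(q) ≤ x(z), y(q) ≥ y(z)}|, se(z) = |{q ∈ P : x(q) ≥ x(z), y(q) ≤ y(z)}|, and set ψ_NE(z) = 1/(ne(z)+nw(z)) + 1/(ne(z)+se(z)) − 1/(ne(z)+nw(z)+se(z)), ψ_NW(z) = 1/(ne(z)+nw(z)) − 1/(ne(z)+nw(z)+se(z)), ψ_SE(z) = 1/(ne(z)+se(z)) − 1/(ne(z)+nw(z)+se(z)). Then for every p ∈ P, φ(p, v_abb) = ∫_{(0,x(p))×(0,y(p))} ψ_NE(z) dz + ∫_{(x(p),X)×(0,y(p))} ψ_NW(z) dz + ∫_{(0,x(p))×(y(p),Y)}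 ψ_SE(z) dz, where all integrals are with respect to Lebesgue measure (on these regions the relevant denominators are nonzero almost everywhere). -/

import Mathlib

open MeasureTheory

open Finset

/-- The Shapley value of player `p` in the coalitional game with player set `P`
and characteristic function `v`. -/
noncomputable def shapley {α : Type*} [DecidableEq α] (P : Finset α) (v : Finset α → ℝ)
    (p : α) : ℝ :=
  if hp : p ∈ P then
    (∑ π : {x // x ∈ P} ≃ Fin P.card,
      (v ((P.attach.filter fun q => π q ≤ π ⟨p, hp⟩).image Subtype.val) -
        v (((P.attach.filter fun q => π q ≤ π ⟨p, hp⟩).image Subtype.val).erase p))) /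
      (P.card).factorial
  else 0
/-- Number of points of `P` to the north-east of `z`. -/
noncomputable def neCount (P : Finset (ℝ × ℝ)) (z : ℝ × ℝ) : ℕ :=
  (P.filter fun q => z.1 ≤ q.1 ∧ z.2 ≤ q.2).card

/-- Number of points of `P` to the north-west of `z`. -/
noncomputable def nwCount (P : Finset (ℝ × ℝ)) (z : ℝ × ℝ) : ℕ :=
  (P.filter fun q => q.1 ≤ z.1 ∧ z.2 ≤ q.2).card

/-- Number of points of `P` to the south-east of `z`. -/
noncomputable def seCount (P : Finset (ℝ × ℝ)) (z : ℝ × ℝ) : ℕ :=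
  (P.filter fun q => z.1 ≤ q.1 ∧ q.2 ≤ z.2).card

noncomputable def psiNE (P : Finset (ℝ × ℝ)) (z : ℝ × ℝ) : ℝ :=
  1 / ((neCount P z : ℝ) + (nwCount P z : ℝ)) +
    1 / ((neCount P z : ℝ) + (seCount P z : ℝ)) -
    1 / ((neCount P z : ℝ) + (nwCount P z : ℝ) + (seCount P z : ℝ))

noncomputable def psiNW (P : Finset (ℝ × ℝ)) (z : ℝ × ℝ) : ℝ :=
  1 / ((neCount P z : ℝ) + (nwCount P z : ℝ)) -
    1 / ((neCount P z : ℝ) + (nwCount P z : ℝ) + (seCount P z : ℝ))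

noncomputable def psiSE (P : Finset (ℝ × ℝ)) (z : ℝ × ℝ) : ℝ :=
  1 / ((neCount P z : ℝ) + (seCount P z : ℝ)) -
    1 / ((neCount P z : ℝ) + (nwCount P z : ℝ) + (seCount P z : ℝ))

/-!
The area of the anchored bounding box of `Q` is the Lebesgue measure of `anchoredBox Q`, and the
Shapley value is linear in the game, so `φ(p, v_abb)` is the integral over `z` of the Shapley value
of the simple game `Q ↦ [z ∈ anchoredBox Q]`. For `z` in the open quadrant this game asks for a
point of `Q` to the right of `z` (set `B`) and a point above `z` (set `A`); by inclusion–exclusion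
it is `h_A + h_B - h_{A ∪ B}`, where `h_S Q = [Q ∩ S ≠ ∅]`. In `h_S` the player `p ∈ S` is pivotal
exactly when it comes first among `S`, which happens for a fraction `1 / |S|` of the orderings.
Off the null set of lines through points of `P` we have `|A| = ne + nw`, `|B| = ne + se` and
`|A ∪ B| = ne + nw + se`, and the position of `z` relative to `p` and to `(X, Y)` decides which
terms survive.
-/

section FirstAmong

variable {α β : Type*} [LinearOrder β]

lemma card_filter_forall_le_eq_one (π : α ≃ β) {S : Finset α} (hS : S.Nonempty) :
    #{a ∈ S | ∀ q ∈ S, π a ≤ π q} = 1 := by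
  obtain ⟨a, haS, ha⟩ := S.exists_min_image π hS
  refine card_eq_one.2 ⟨a, ext fun b => ⟨fun hb => ?_, fun hb => ?_⟩⟩
  · rw [mem_filter] at hb
    exact mem_singleton.2 (π.injective (le_antisymm (hb.2 a haS) (ha b hb.1)))
  · rw [mem_singleton.1 hb]
    exact mem_filter.2 ⟨haS, ha⟩

lemma forall_le_swap_trans [DecidableEq α] {S : Finset α} {a b : α} (ha : a ∈ S) (hb : b ∈ S)
    {π : α ≃ β} (hπ : ∀ q ∈ S, π b ≤ π q) :
    ∀ q ∈ S, (Equiv.swap a b).trans π a ≤ (Equiv.swap a b).trans π q := by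
  intro q hq
  simp only [Equiv.trans_apply, Equiv.swap_apply_left]
  refine hπ _ ?_
  rw [Equiv.swap_apply_def]
  split_ifs <;> assumption

variable [DecidableEq α] [Fintype α] [Fintype β] [DecidableEq β]

theorem card_filter_forall_le_mul_card {p : α} {S : Finset α} (hp : p ∈ S) :
    #{π : α ≃ β | ∀ q ∈ S, π p ≤ π q} * #S = Fintype.card (α ≃ β) := by
  have hfirst : ∀ a ∈ S,
      #{π : α ≃ β | ∀ q ∈ S, π a ≤ π q} = #{π : α ≃ β | ∀ q ∈ S, π p ≤ π q} := by
    intro a ha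
    refine card_nbij' (fun π => (Equiv.swap p a).trans π) (fun π => (Equiv.swap a p).trans π)
      (fun π hπ => ?_) (fun π hπ => ?_) (fun π _ => ?_) (fun π _ => ?_)
    · simp only [coe_filter, mem_univ, true_and, Set.mem_ofPred_eq] at hπ ⊢
      exact forall_le_swap_trans hp ha hπ
    · simp only [coe_filter, mem_univ, true_and, Set.mem_ofPred_eq] at hπ ⊢
      exact forall_le_swap_trans ha hp hπ
    all_goals ext; simp [Equiv.swap_comm a p]
  calc #{π : α ≃ β | ∀ q ∈ S, π p ≤ π q} * #S
      = ∑ a ∈ S, #{π : α ≃ β | ∀ q ∈ S, π a ≤ π q} := by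
        rw [sum_congr rfl hfirst, sum_const, smul_eq_mul, mul_comm]
    _ = ∑ π : α ≃ β, #{a ∈ S | ∀ q ∈ S, π a ≤ π q} := by
        simpa only [bipartiteAbove, bipartiteBelow] using
          sum_card_bipartiteAbove_eq_sum_card_bipartiteBelow (s := S) (t := univ)
            fun a (π : α ≃ β) => ∀ q ∈ S, π a ≤ π q
    _ = ∑ _π : α ≃ β, 1 :=
        sum_congr rfl fun π _ => by convert card_filter_forall_le_eq_one π ⟨p, hp⟩
    _ = Fintype.card (α ≃ β) := by simp

end FirstAmong

section Linearity

variable {α : Type*} [DecidableEq α] (P : Finset α) (p : α)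

lemma shapley_congr {v w : Finset α → ℝ} (h : ∀ Q ⊆ P, v Q = w Q) :
    shapley P v p = shapley P w p := by
  unfold shapley
  split_ifs with hp
  · congr 1
    refine sum_congr rfl fun π _ => ?_
    have hsub : (P.attach.filter fun q => π q ≤ π ⟨p, hp⟩).image Subtype.val ⊆ P := by
      intro q hq
      obtain ⟨q', _, rfl⟩ := mem_image.1 hq
      exact q'.2
    rw [h _ hsub, h _ ((erase_subset _ _).trans hsub)]
  · rfl

lemma shapley_add (v w : Finset α → ℝ) :
    shapley P (v + w) p = shapley P v p + shapley P w p := by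
  unfold shapley
  split_ifs
  · rw [← add_div, ← sum_add_distrib]
    congr 1
    exact sum_congr rfl fun _ _ => by simp only [Pi.add_apply]; ring
  · simp

lemma shapley_sub (v w : Finset α → ℝ) :
    shapley P (v - w) p = shapley P v p - shapley P w p := by
  unfold shapley
  split_ifs
  · rw [← sub_div, ← sum_sub_distrib]
    congr 1
    exact sum_congr rfl fun _ _ => by simp only [Pi.sub_apply]; ring
  · simp

lemma shapley_integral {Ω : Type*} [MeasurableSpace Ω] (μ : Measure Ω)
    (g : Finset α → Ω → ℝ) (hg : ∀ Q, Integrable (g Q) μ) :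
    shapley P (fun Q => ∫ ω, g Q ω ∂μ) p = ∫ ω, shapley P (fun Q => g Q ω) p ∂μ := by
  unfold shapley
  split_ifs
  · beta_reduce
    rw [integral_div, integral_finsetSum]
    · exact congrArg (· / _) (sum_congr rfl fun π _ => (integral_sub (hg _) (hg _)).symm)
    · exact fun π _ => (hg _).sub (hg _)
  · simp

end Linearity

section HittingGame

variable {α : Type*} {P : Finset α} {p : α}

lemma exists_mem_predecessors_iff [DecidableEq α] (hp : p ∈ P) (π : {x // x ∈ P} ≃ Fin #P)
    {r : α → Prop} :
    (∃ q ∈ (P.attach.filter fun q => π q ≤ π ⟨p, hp⟩).image Subtype.val, r q) ↔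
      ∃ q : {x // x ∈ P}, π q ≤ π ⟨p, hp⟩ ∧ r q := by
  simp

lemma exists_mem_erase_predecessors_iff [DecidableEq α] (hp : p ∈ P)
    (π : {x // x ∈ P} ≃ Fin #P) {r : α → Prop} :
    (∃ q ∈ ((P.attach.filter fun q => π q ≤ π ⟨p, hp⟩).image Subtype.val).erase p, r q) ↔
      ∃ q : {x // x ∈ P}, π q < π ⟨p, hp⟩ ∧ r q := by
  simp only [mem_erase, mem_image, mem_filter, mem_attach, true_and]
  constructor
  · rintro ⟨_, ⟨hne, q, hq, rfl⟩, hr⟩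
    exact ⟨q, lt_of_le_of_ne hq fun h => hne (congrArg Subtype.val (π.injective h)), hr⟩
  · rintro ⟨q, hq, hr⟩
    exact ⟨q, ⟨fun h => hq.ne (congrArg π (Subtype.ext h)), q, hq.le, rfl⟩, hr⟩

lemma isFirst_iff (hp : p ∈ P) (π : {x // x ∈ P} ≃ Fin #P) {r : α → Prop} :
    (r p ∧ ∀ q : {x // x ∈ P}, r q → π ⟨p, hp⟩ ≤ π q) ↔
      (∃ q : {x // x ∈ P}, π q ≤ π ⟨p, hp⟩ ∧ r q) ∧
        ¬∃ q : {x // x ∈ P}, π q < π ⟨p, hp⟩ ∧ r q := by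
  constructor
  · rintro ⟨hrp, hfirst⟩
    exact ⟨⟨_, le_rfl, hrp⟩, fun ⟨q, hq, hr⟩ => hq.not_ge (hfirst q hr)⟩
  · rintro ⟨⟨q, hq, hr⟩, hnot⟩
    have hfirst : ∀ q : {x // x ∈ P}, r q → π ⟨p, hp⟩ ≤ π q :=
      fun q hrq => not_lt.1 fun hlt => hnot ⟨q, hlt, hrq⟩
    obtain rfl : q = ⟨p, hp⟩ := π.injective (le_antisymm hq (hfirst q hr))
    exact ⟨hr, hfirst⟩

def hittingGame (r : α → Prop) [DecidablePred r] (Q : Finset α) : ℝ :=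
  if ∃ q ∈ Q, r q then 1 else 0

variable [DecidableEq α]

lemma hittingGame_sub_hittingGame_erase (hp : p ∈ P) (π : {x // x ∈ P} ≃ Fin #P)
    (r : α → Prop) [DecidablePred r] :
    hittingGame r ((P.attach.filter fun q => π q ≤ π ⟨p, hp⟩).image Subtype.val) -
        hittingGame r (((P.attach.filter fun q => π q ≤ π ⟨p, hp⟩).image Subtype.val).erase p) =
      if r p ∧ ∀ q : {x // x ∈ P}, r q → π ⟨p, hp⟩ ≤ π q then 1 else 0 := by
  simp only [isFirst_iff, hittingGame, exists_mem_predecessors_iff,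
    exists_mem_erase_predecessors_iff]
  by_cases hlt : ∃ q : {x // x ∈ P}, π q < π ⟨p, hp⟩ ∧ r q
  · obtain ⟨q, hq, hr⟩ := hlt
    rw [if_pos ⟨q, hq.le, hr⟩, if_pos ⟨q, hq, hr⟩, if_neg fun h => h.2 ⟨q, hq, hr⟩, sub_self]
  · simp only [hlt, if_false, sub_zero, not_false_eq_true, and_true]

theorem shapley_hittingGame (hp : p ∈ P) (r : α → Prop) [DecidablePred r] :
    shapley P (hittingGame r) p = if r p then (1 : ℝ) / #(P.filter r) else 0 := by
  rw [shapley, dif_pos hp]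
  simp only [hittingGame_sub_hittingGame_erase hp, sum_boole]
  split_ifs with hrp
  · have hcount := card_filter_forall_le_mul_card (β := Fin #P) (p := (⟨p, hp⟩ : {x // x ∈ P}))
      (S := univ.filter fun q => r q) (by simpa using hrp)
    have hS : #(univ.filter fun q : {x // x ∈ P} => r q) = #(P.filter r) := by
      rw [univ_eq_attach, filter_attach, card_map, card_attach]
    rw [hS, Fintype.card_equiv (Fintype.equivFinOfCardEq (Fintype.card_coe P)),
      Fintype.card_coe] at hcount
    simp only [mem_filter, mem_univ, true_and] at hcount
    simp only [hrp, true_and]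
    have hpos : (0 : ℝ) < #(P.filter r) := by
      exact_mod_cast card_pos.2 ⟨p, mem_filter.2 ⟨hp, hrp⟩⟩
    rw [div_eq_div_iff (by positivity) hpos.ne', one_mul]
    exact_mod_cast hcount
  · simp [hrp]

end HittingGame

theorem shapley_hittingGame_and {α : Type*} [DecidableEq α] {P : Finset α} {p : α} (hp : p ∈ P)
    (a b : α → Prop) [DecidablePred a] [DecidablePred b] :
    shapley P (fun Q => if (∃ q ∈ Q, a q) ∧ (∃ q ∈ Q, b q) then 1 else 0) p =
      (if a p then (1 : ℝ) / #(P.filter a) else 0) +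
          (if b p then (1 : ℝ) / #(P.filter b) else 0) -
        if a p ∨ b p then (1 : ℝ) / #(P.filter fun q => a q ∨ b q) else 0 := by
  have hincl_excl : (fun Q => if (∃ q ∈ Q, a q) ∧ (∃ q ∈ Q, b q) then (1 : ℝ) else 0) =
      hittingGame a + hittingGame b - hittingGame fun q => a q ∨ b q := by
    funext Q
    simp only [hittingGame, Pi.add_apply, Pi.sub_apply, and_or_left, exists_or]
    by_cases hA : ∃ q ∈ Q, a q <;> by_cases hB : ∃ q ∈ Q, b q <;> simp [hA, hB]
  rw [hincl_excl, shapley_sub, shapley_add, shapley_hittingGame hp, shapley_hittingGame hp,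
    shapley_hittingGame hp]

def anchoredBox (Q : Finset (ℝ × ℝ)) : Set (ℝ × ℝ) :=
  {z | 0 < z.1 ∧ 0 < z.2 ∧ (∃ q ∈ Q, z.1 < q.1) ∧ ∃ q ∈ Q, z.2 < q.2}

lemma anchoredBox_empty : anchoredBox ∅ = ∅ := by
  simp [anchoredBox]

lemma anchoredBox_eq_prod {Q : Finset (ℝ × ℝ)} (hQ : Q.Nonempty) :
    anchoredBox Q =
      Set.Ioo 0 (Q.sup' hQ fun q => q.1) ×ˢ Set.Ioo 0 (Q.sup' hQ fun q => q.2) := by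
  ext z
  simp only [anchoredBox, Set.mem_ofPred_eq, Set.mem_prod, Set.mem_Ioo, lt_sup'_iff]
  tauto

lemma integrable_indicator_anchoredBox (Q : Finset (ℝ × ℝ)) :
    Integrable ((anchoredBox Q).indicator (1 : ℝ × ℝ → ℝ)) := by
  rcases Q.eq_empty_or_nonempty with rfl | hQ
  · simp [anchoredBox_empty]
  · rw [anchoredBox_eq_prod hQ,
      integrable_indicator_iff (measurableSet_Ioo.prod measurableSet_Ioo)]
    exact integrableOn_const
      ((Metric.isBounded_Ioo _ _).prod (Metric.isBounded_Ioo _ _)).measure_lt_top.ne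

lemma integral_indicator_anchoredBox {Q : Finset (ℝ × ℝ)} (hpos : ∀ q ∈ Q, 0 < q.1 ∧ 0 < q.2) :
    ∫ z, (anchoredBox Q).indicator 1 z =
      if h : Q.Nonempty then (Q.sup' h fun q => q.1) * (Q.sup' h fun q => q.2) else 0 := by
  rcases Q.eq_empty_or_nonempty with rfl | hQ
  · simp [anchoredBox_empty]
  · obtain ⟨q, hq⟩ := hQ
    rw [dif_pos ⟨q, hq⟩, anchoredBox_eq_prod ⟨q, hq⟩,
      integral_indicator_one (measurableSet_Ioo.prod measurableSet_Ioo), Measure.volume_eq_prod,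
      measureReal_prod_prod, Real.volume_real_Ioo_of_le, Real.volume_real_Ioo_of_le, sub_zero,
      sub_zero]
    · exact (hpos q hq).2.le.trans (le_sup' _ hq)
    · exact (hpos q hq).1.le.trans (le_sup' _ hq)

theorem shapley_indicator_anchoredBox {P : Finset (ℝ × ℝ)} {p z : ℝ × ℝ} (hp : p ∈ P)
    (hz : 0 < z.1 ∧ 0 < z.2) :
    shapley P (fun Q => (anchoredBox Q).indicator 1 z) p =
      (if z.1 < p.1 then (1 : ℝ) / #{q ∈ P | z.1 < q.1} else 0) +
        (if z.2 < p.2 then (1 : ℝ) / #{q ∈ P | z.2 < q.2} else 0) -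
        if z.1 < p.1 ∨ z.2 < p.2 then (1 : ℝ) / #{q ∈ P | z.1 < q.1 ∨ z.2 < q.2} else 0 := by
  have hgame : (fun Q => (anchoredBox Q).indicator 1 z) =
      fun Q => if (∃ q ∈ Q, z.1 < q.1) ∧ (∃ q ∈ Q, z.2 < q.2) then (1 : ℝ) else 0 := by
    funext Q
    simp only [Set.indicator_apply, anchoredBox, Set.mem_ofPred_eq, hz.1, hz.2, true_and,
      Pi.one_apply]
  rw [hgame, shapley_hittingGame_and hp]

section Counts

variable {P : Finset (ℝ × ℝ)} {z : ℝ × ℝ}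

lemma card_filter_fst_lt (hz : ∀ q ∈ P, z.1 ≠ q.1 ∧ z.2 ≠ q.2) :
    #{q ∈ P | z.1 < q.1} = neCount P z + seCount P z := by
  rw [neCount, seCount, card_filter, card_filter, card_filter, ← sum_add_distrib]
  refine sum_congr rfl fun q hq => ?_
  rcases (hz q hq).1.lt_or_gt with h1 | h1 <;> rcases (hz q hq).2.lt_or_gt with h2 | h2 <;>
    simp [h1, h1.le, h2.le, h1.not_ge, h2.not_ge]

lemma card_filter_snd_lt (hz : ∀ q ∈ P, z.1 ≠ q.1 ∧ z.2 ≠ q.2) :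
    #{q ∈ P | z.2 < q.2} = neCount P z + nwCount P z := by
  rw [neCount, nwCount, card_filter, card_filter, card_filter, ← sum_add_distrib]
  refine sum_congr rfl fun q hq => ?_
  rcases (hz q hq).1.lt_or_gt with h1 | h1 <;> rcases (hz q hq).2.lt_or_gt with h2 | h2 <;>
    simp [h2, h1.le, h2.le, h1.not_ge, h2.not_ge]

lemma card_filter_fst_lt_or_snd_lt (hz : ∀ q ∈ P, z.1 ≠ q.1 ∧ z.2 ≠ q.2) :
    #{q ∈ P | z.1 < q.1 ∨ z.2 < q.2} = neCount P z + nwCount P z + seCount P z := by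
  rw [neCount, nwCount, seCount, card_filter, card_filter, card_filter, card_filter,
    ← sum_add_distrib, ← sum_add_distrib]
  refine sum_congr rfl fun q hq => ?_
  rcases (hz q hq).1.lt_or_gt with h1 | h1 <;> rcases (hz q hq).2.lt_or_gt with h2 | h2 <;>
    simp [h1, h2, h1.le, h2.le, h1.not_ge, h2.not_ge]

end Counts

theorem shapley_indicator_anchoredBox_eq {P : Finset (ℝ × ℝ)} {p z : ℝ × ℝ} (hp : p ∈ P)
    (hp0 : 0 < p.1 ∧ 0 < p.2) (hz : ∀ q ∈ P, z.1 ≠ q.1 ∧ z.2 ≠ q.2) :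
    shapley P (fun Q => (anchoredBox Q).indicator 1 z) p =
      (Set.Ioo 0 p.1 ×ˢ Set.Ioo 0 p.2).indicator (psiNE P) z +
        (Set.Ioo p.1 (P.sup' ⟨p, hp⟩ fun q => q.1) ×ˢ Set.Ioo 0 p.2).indicator (psiNW P) z +
        (Set.Ioo 0 p.1 ×ˢ Set.Ioo p.2 (P.sup' ⟨p, hp⟩ fun q => q.2)).indicator (psiSE P) z := by
  simp only [Set.indicator_apply, Set.mem_prod, Set.mem_Ioo]
  by_cases hz0 : 0 < z.1 ∧ 0 < z.2
  swap
  · have hgame : (fun Q => (anchoredBox Q).indicator 1 z) = fun _ => (0 : ℝ) :=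
      funext fun Q => Set.indicator_of_notMem (fun h => hz0 ⟨h.1, h.2.1⟩) _
    rw [hgame, if_neg fun h => hz0 ⟨h.1.1, h.2.1⟩, if_neg fun h => hz0 ⟨hp0.1.trans h.1.1, h.2.1⟩,
      if_neg fun h => hz0 ⟨h.1.1, hp0.2.trans h.2.1⟩]
    simp [shapley]
  rw [shapley_indicator_anchoredBox hp hz0]
  obtain ⟨hx, hy⟩ := hz p hp
  rcases hx.lt_or_gt with hx | hx <;> rcases hy.lt_or_gt with hy | hy
  · rw [card_filter_fst_lt hz, card_filter_snd_lt hz, card_filter_fst_lt_or_snd_lt hz]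
    simp [hx, hy, hz0, hx.not_gt, hy.not_gt, psiNE]
    ring
  · by_cases hY : z.2 < P.sup' ⟨p, hp⟩ fun q => q.2
    · rw [card_filter_fst_lt hz, card_filter_fst_lt_or_snd_lt hz]
      simp [hx, hy, hz0, hY, hy.not_gt, psiSE]
    · have hsnd : ∀ q ∈ P, ¬z.2 < q.2 := fun q hq h => hY (h.trans_le (le_sup' _ hq))
      rw [filter_congr fun q hq => or_iff_left (hsnd q hq)]
      simp [hx, hy, hz0, hY, hy.not_gt]
  · by_cases hX : z.1 < P.sup' ⟨p, hp⟩ fun q => q.1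
    · rw [card_filter_snd_lt hz, card_filter_fst_lt_or_snd_lt hz]
      simp [hx, hy, hz0, hX, hx.not_gt, psiNW]
    · have hfst : ∀ q ∈ P, ¬z.1 < q.1 := fun q hq h => hX (h.trans_le (le_sup' _ hq))
      rw [filter_congr fun q hq => or_iff_right (hfst q hq)]
      simp [hx, hy, hz0, hX, hx.not_gt]
  · simp [hx, hy, hz0, hx.not_gt, hy.not_gt]

lemma ae_forall_fst_ne_and_snd_ne (P : Finset (ℝ × ℝ)) :
    ∀ᵐ z : ℝ × ℝ, ∀ q ∈ P, z.1 ≠ q.1 ∧ z.2 ≠ q.2 := by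
  rw [Filter.eventually_all_finset]
  intro q _
  rw [Measure.volume_eq_prod]
  exact (Measure.quasiMeasurePreserving_fst.ae (volume.ae_ne q.1)).and
    (Measure.quasiMeasurePreserving_snd.ae (volume.ae_ne q.2))

lemma measurable_card_filter {Ω α : Type*} [MeasurableSpace Ω] (P : Finset α) {r : Ω → α → Prop}
    [∀ z q, Decidable (r z q)] (hr : ∀ q, MeasurableSet {z | r z q}) :
    Measurable fun z => (#{q ∈ P | r z q} : ℝ) := by
  simp only [card_filter, Nat.cast_sum, Nat.cast_ite, Nat.cast_one, Nat.cast_zero]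
  exact Finset.measurable_sum _ fun q _ => Measurable.ite (hr q) measurable_const measurable_const

lemma one_div_natCast_mem_Icc (n : ℕ) : 1 / (n : ℝ) ∈ Set.Icc 0 1 :=
  ⟨by positivity, by simpa using Nat.cast_inv_le_one n⟩

section Psi

variable (P : Finset (ℝ × ℝ))

lemma measurable_neCount : Measurable fun z => (neCount P z : ℝ) :=
  measurable_card_filter P fun _ => (measurableSet_le measurable_fst measurable_const).inter
    (measurableSet_le measurable_snd measurable_const)

lemma measurable_nwCount : Measurable fun z => (nwCount P z : ℝ) :=
  measurable_card_filter P fun _ => (measurableSet_le measurable_const measurable_fst).inter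
    (measurableSet_le measurable_snd measurable_const)

lemma measurable_seCount : Measurable fun z => (seCount P z : ℝ) :=
  measurable_card_filter P fun _ => (measurableSet_le measurable_fst measurable_const).inter
    (measurableSet_le measurable_const measurable_snd)

lemma measurable_psiNE : Measurable (psiNE P) :=
  ((((measurable_neCount P).add (measurable_nwCount P)).const_div 1).add
    (((measurable_neCount P).add (measurable_seCount P)).const_div 1)).sub
    ((((measurable_neCount P).add (measurable_nwCount P)).add (measurable_seCount P)).const_div 1)

lemma measurable_psiNW : Measurable (psiNW P) :=
  (((measurable_neCount P).add (measurable_nwCount P)).const_div 1).sub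
    ((((measurable_neCount P).add (measurable_nwCount P)).add (measurable_seCount P)).const_div 1)

lemma measurable_psiSE : Measurable (psiSE P) :=
  (((measurable_neCount P).add (measurable_seCount P)).const_div 1).sub
    ((((measurable_neCount P).add (measurable_nwCount P)).add (measurable_seCount P)).const_div 1)

lemma norm_psiNE_le (z : ℝ × ℝ) : ‖psiNE P z‖ ≤ 2 := by
  have h1 := one_div_natCast_mem_Icc (neCount P z + nwCount P z)
  have h2 := one_div_natCast_mem_Icc (neCount P z + seCount P z)
  have h3 := one_div_natCast_mem_Icc (neCount P z + nwCount P z + seCount P z)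
  push_cast [Set.mem_Icc] at h1 h2 h3
  rw [psiNE, Real.norm_eq_abs, abs_le]
  constructor <;> linarith

lemma norm_psiNW_le (z : ℝ × ℝ) : ‖psiNW P z‖ ≤ 2 := by
  have h1 := one_div_natCast_mem_Icc (neCount P z + nwCount P z)
  have h3 := one_div_natCast_mem_Icc (neCount P z + nwCount P z + seCount P z)
  push_cast [Set.mem_Icc] at h1 h3
  rw [psiNW, Real.norm_eq_abs, abs_le]
  constructor <;> linarith

lemma norm_psiSE_le (z : ℝ × ℝ) : ‖psiSE P z‖ ≤ 2 := by
  have h2 := one_div_natCast_mem_Icc (neCount P z + seCount P z)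
  have h3 := one_div_natCast_mem_Icc (neCount P z + nwCount P z + seCount P z)
  push_cast [Set.mem_Icc] at h2 h3
  rw [psiSE, Real.norm_eq_abs, abs_le]
  constructor <;> linarith

end Psi

lemma integrableOn_Ioo_prod_Ioo {f : ℝ × ℝ → ℝ} (hf : Measurable f) {C : ℝ}
    (hC : ∀ z, ‖f z‖ ≤ C) (a b c d : ℝ) : IntegrableOn f (Set.Ioo a b ×ˢ Set.Ioo c d) :=
  Measure.integrableOn_of_bounded
    ((Metric.isBounded_Ioo a b).prod (Metric.isBounded_Ioo c d)).measure_lt_top.ne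
    hf.aestronglyMeasurable (ae_of_all _ hC)

theorem shapley_area_anchored_bounding_box_general (P : Finset (ℝ × ℝ))
    (hpos : ∀ q ∈ P, 0 < q.1 ∧ 0 < q.2)
    (p : ℝ × ℝ) (hp : p ∈ P) :
    shapley P
      (fun Q => if h : Q.Nonempty then
          (Q.sup' h fun q => q.1) * (Q.sup' h fun q => q.2) else 0) p =
      (∫ z in (Set.Ioo (0 : ℝ) p.1) ×ˢ (Set.Ioo (0 : ℝ) p.2), psiNE P z) +
        (∫ z in (Set.Ioo p.1 (P.sup' ⟨p, hp⟩ fun q => q.1)) ×ˢ (Set.Ioo (0 : ℝ) p.2),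
          psiNW P z) +
        (∫ z in (Set.Ioo (0 : ℝ) p.1) ×ˢ (Set.Ioo p.2 (P.sup' ⟨p, hp⟩ fun q => q.2)),
          psiSE P z) := by
  have harea : ∀ Q ⊆ P, (if h : Q.Nonempty then
      (Q.sup' h fun q => q.1) * (Q.sup' h fun q => q.2) else 0) =
        ∫ z, (anchoredBox Q).indicator 1 z :=
    fun Q hQ => (integral_indicator_anchoredBox fun q hq => hpos q (hQ hq)).symm
  rw [shapley_congr P p harea, shapley_integral P p volume _ integrable_indicator_anchoredBox,
    integral_congr_ae ((ae_forall_fst_ne_and_snd_ne P).mono fun z hz =>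
      shapley_indicator_anchoredBox_eq hp (hpos p hp) hz)]
  have hNE := integrableOn_Ioo_prod_Ioo (measurable_psiNE P) (norm_psiNE_le P) 0 p.1 0 p.2
  have hNW := integrableOn_Ioo_prod_Ioo (measurable_psiNW P) (norm_psiNW_le P) p.1
    (P.sup' ⟨p, hp⟩ fun q => q.1) 0 p.2
  have hSE := integrableOn_Ioo_prod_Ioo (measurable_psiSE P) (norm_psiSE_le P) 0 p.1 p.2
    (P.sup' ⟨p, hp⟩ fun q => q.2)
  have hmeas {a b c d : ℝ} : MeasurableSet (Set.Ioo a b ×ˢ Set.Ioo c d) :=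
    measurableSet_Ioo.prod measurableSet_Ioo
  rw [integral_add, integral_add, integral_indicator hmeas, integral_indicator hmeas,
    integral_indicator hmeas]
  exacts [hNE.integrable_indicator hmeas, hNW.integrable_indicator hmeas,
    (hNE.integrable_indicator hmeas).add (hNW.integrable_indicator hmeas),
    hSE.integrable_indicator hmeas]

/-- Shapley values for the area of the anchored bounding box: for points in the
open positive quadrant with pairwise distinct coordinates and `p ∈ P`,
`φ(p, v_abb)` equals the integral of `ψ_NE` over `(0,x(p))×(0,y(p))`, plus the
integral of `ψ_NW` over `(x(p),X)×(0,y(p))`, plus the integral of `ψ_SE` over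
`(0,x(p))×(y(p),Y)`, where `X` and `Y` are the maximal coordinates of `P`. -/
theorem shapley_area_anchored_bounding_box (P : Finset (ℝ × ℝ))
    (hpos : ∀ q ∈ P, 0 < q.1 ∧ 0 < q.2)
    (hx : ∀ q ∈ P, ∀ q' ∈ P, q ≠ q' → q.1 ≠ q'.1)
    (hy : ∀ q ∈ P, ∀ q' ∈ P, q ≠ q' → q.2 ≠ q'.2)
    (p : ℝ × ℝ) (hp : p ∈ P) :
    shapley P
      (fun Q => if h : Q.Nonempty then
          (Q.sup' h fun q => q.1) * (Q.sup' h fun q => q.2) else 0) p =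
      (∫ z in (Set.Ioo (0 : ℝ) p.1) ×ˢ (Set.Ioo (0 : ℝ) p.2), psiNE P z) +
        (∫ z in (Set.Ioo p.1 (P.sup' ⟨p, hp⟩ fun q => q.1)) ×ˢ (Set.Ioo (0 : ℝ) p.2),
          psiNW P z) +
        (∫ z in (Set.Ioo (0 : ℝ) p.1) ×ˢ (Set.Ioo p.2 (P.sup' ⟨p, hp⟩ fun q => q.2)),
          psiSE P z) :=
  shapley_area_anchored_bounding_box_general P hpos p hp
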